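/- arXiv:1608.04918 — 3 statements merged into one kernel-verified Lean document; each statement's English description precedes it below -/
import Mathlib

section
/- Given f ∈ L²(m) and α > 0, the function j(t,·) := 𝒥^α_t f is the unique L²(m)-valued solution of the Cauchy problem dj/dt = -U^α j with j(0,·) = U^α f, where U^α = ∫₀^∞ (λ+α)^{-1} dE_λ is the resolvent operator. -/
/-!
Pointwise, `J t = c e^{-tc} f` with `c = (Λ + α)⁻¹ ∈ (0, α⁻¹]`. The second-order Taylor remainder
of `t ↦ c e^{-tc}` on `[0, ∞)` is at most `c³ (s - t)²`, uniformly in `ω`, so multiplying by `f`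
and taking `L²` norms gives a remainder `O((s - t)²)`: this is the derivative `-U^α J t`.
Uniqueness holds because `-U^α` is a bounded linear operator, hence globally Lipschitz, and
Grönwall-type ODE uniqueness applies.
-/

open MeasureTheory Real Set Filter Topology Asymptotics

theorem abs_exp_neg_sub_exp_neg_add_mul_le {x y : ℝ} (hx : 0 ≤ x) (hy : 0 ≤ y) :
    |exp (-x) - exp (-y) + (x - y) * exp (-y)| ≤ (x - y) ^ 2 := by
  have tangent (a b : ℝ) : exp (-b) * (b - a + 1) ≤ exp (-a) :=
    calc exp (-b) * (b - a + 1) ≤ exp (-b) * exp (b - a) := by gcongr; exact add_one_le_exp _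
      _ = exp (-a) := by rw [← exp_add]; ring_nf
  have hxy := tangent x y
  have hyx := tangent y x
  have hx1 : exp (-x) ≤ 1 := exp_le_one_iff.mpr (by linarith)
  have hy1 : exp (-y) ≤ 1 := exp_le_one_iff.mpr (by linarith)
  rw [abs_le]
  constructor
  · nlinarith [sq_nonneg (x - y)]
  · rcases le_total y x with h | h
    · nlinarith [mul_nonneg (sub_nonneg.2 h) (sub_nonneg.2 h),
        mul_nonneg (sub_nonneg.2 h) (sub_nonneg.2 hy1)]
    · nlinarith [mul_nonneg (sub_nonneg.2 h) (sub_nonneg.2 hx1)]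

theorem hasDerivWithinAt_of_norm_sub_sub_smul_le {E : Type*} [NormedAddCommGroup E]
    [NormedSpace ℝ E] {F : ℝ → E} {v : E} {s : Set ℝ} {t C : ℝ}
    (h : ∀ u ∈ s, ‖F u - F t - (u - t) • v‖ ≤ C * (u - t) ^ 2) :
    HasDerivWithinAt F v s t := by
  rw [hasDerivWithinAt_iff_isLittleO]
  have hO : (fun u => F u - F t - (u - t) • v) =O[𝓝[s] t] fun u => ‖u - t‖ ^ 2 :=
    IsBigO.of_bound C <| eventually_mem_nhdsWithin.mono fun u hu => by
      simpa using h u hu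
  exact hO.trans_isLittleO ((isLittleO_pow_sub_sub t one_lt_two).mono nhdsWithin_le_nhds)

theorem ContinuousLinearMap.eqOn_Ici_of_hasDerivWithinAt {E : Type*} [NormedAddCommGroup E]
    [NormedSpace ℝ E] (A : E →L[ℝ] E) {f g : ℝ → E} {a : ℝ}
    (hf : ∀ t ∈ Ici a, HasDerivWithinAt f (A (f t)) (Ici a) t)
    (hg : ∀ t ∈ Ici a, HasDerivWithinAt g (A (g t)) (Ici a) t) (ha : f a = g a) :
    EqOn f g (Ici a) := fun t ht =>
  have hcont {h : ℝ → E} (hh : ∀ t ∈ Ici a, HasDerivWithinAt h (A (h t)) (Ici a) t) :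
      ContinuousOn h (Icc a t) := fun u hu =>
    (hh u hu.1).continuousWithinAt.mono Icc_subset_Ici_self
  have hderiv {h : ℝ → E} (hh : ∀ t ∈ Ici a, HasDerivWithinAt h (A (h t)) (Ici a) t) :
      ∀ u ∈ Ico a t, HasDerivWithinAt h (A (h u)) (Ici u) u := fun u hu =>
    (hh u hu.1).mono (Ici_subset_Ici.mpr hu.1)
  ODE_solution_unique (v := fun _ => A) (fun _ => A.lipschitz) (hcont hf) (hderiv hf)
    (hcont hg) (hderiv hg) ha ⟨ht, le_rfl⟩

theorem abs_inv_mul_exp_neg_div_sub_add_le {a d s t : ℝ} (ha : 0 < a) (had : a ≤ d)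
    (hs : 0 ≤ s) (ht : 0 ≤ t) :
    |d⁻¹ * exp (-(s / d)) - d⁻¹ * exp (-(t / d)) + (s - t) * (d⁻¹ * (d⁻¹ * exp (-(t / d))))|
      ≤ a⁻¹ ^ 3 * (s - t) ^ 2 := by
  have hd : 0 < d := ha.trans_le had
  have hdinv : d⁻¹ ≤ a⁻¹ := inv_anti₀ ha had
  calc _ = d⁻¹ * |exp (-(s / d)) - exp (-(t / d)) + (s / d - t / d) * exp (-(t / d))| := by
        rw [← abs_of_pos (inv_pos.2 hd), ← abs_mul, abs_of_pos (inv_pos.2 hd)]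
        congr 1; ring
    _ ≤ d⁻¹ * (s / d - t / d) ^ 2 := by
        gcongr; exact abs_exp_neg_sub_exp_neg_add_mul_le (by positivity) (by positivity)
    _ = d⁻¹ ^ 3 * (s - t) ^ 2 := by ring
    _ ≤ a⁻¹ ^ 3 * (s - t) ^ 2 := by gcongr

section SpectralModel

variable {Ω : Type*} [MeasurableSpace Ω] {μ : Measure Ω} {Λ : Ω → ℝ} {α : ℝ} {f : Lp ℝ 2 μ}
  {Uα : Lp ℝ 2 μ →L[ℝ] Lp ℝ 2 μ} {J : ℝ → Lp ℝ 2 μ}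

theorem norm_sub_add_smul_resolvent_le (hΛ : ∀ ω, 0 ≤ Λ ω) (hα : 0 < α)
    (hU : ∀ h : Lp ℝ 2 μ, ⇑(Uα h) =ᵐ[μ] fun ω => (Λ ω + α)⁻¹ * h ω)
    (hJ : ∀ t, ⇑(J t) =ᵐ[μ] fun ω => (Λ ω + α)⁻¹ * Real.exp (-(t / (Λ ω + α))) * f ω)
    {s t : ℝ} (hs : 0 ≤ s) (ht : 0 ≤ t) :
    ‖J s - J t + (s - t) • Uα (J t)‖ ≤ α⁻¹ ^ 3 * (s - t) ^ 2 * ‖f‖ := by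
  refine Lp.norm_le_mul_norm_of_ae_le_mul ?_
  filter_upwards [Lp.coeFn_add (J s - J t) ((s - t) • Uα (J t)), Lp.coeFn_sub (J s) (J t),
    Lp.coeFn_smul (s - t) (Uα (J t)), hJ s, hJ t, hU (J t)] with ω hadd hsub hsmul hJs hJt hUJt
  simp only [hadd, hsub, hsmul, Pi.add_apply, Pi.sub_apply, Pi.smul_apply, smul_eq_mul, hJs, hJt,
    hUJt, Real.norm_eq_abs]
  calc _ = |(Λ ω + α)⁻¹ * exp (-(s / (Λ ω + α))) - (Λ ω + α)⁻¹ * exp (-(t / (Λ ω + α)))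
          + (s - t) * ((Λ ω + α)⁻¹ * ((Λ ω + α)⁻¹ * exp (-(t / (Λ ω + α)))))| * |f ω| := by
        rw [← abs_mul]; ring_nf
    _ ≤ α⁻¹ ^ 3 * (s - t) ^ 2 * |f ω| := by
        gcongr
        exact abs_inv_mul_exp_neg_div_sub_add_le hα (le_add_of_nonneg_left (hΛ ω)) hs ht

end SpectralModel

/-- `Λ` is the spectral variable of `-A`, so that `U^α` and `𝒥^α_t` act as multiplication
operators. -/
theorem stmt_11_general
    {Ω : Type*} [MeasurableSpace Ω] (μ : Measure Ω)
    (Λ : Ω → ℝ) (hΛnonneg : ∀ ω, 0 ≤ Λ ω)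
    (α : ℝ) (hα : 0 < α) (f : Lp ℝ 2 μ)
    (Uα : Lp ℝ 2 μ →L[ℝ] Lp ℝ 2 μ)
    (hU : ∀ h : Lp ℝ 2 μ, ⇑(Uα h) =ᵐ[μ] fun ω => (Λ ω + α)⁻¹ * h ω)
    (J : ℝ → Lp ℝ 2 μ)
    (hJ : ∀ t, ⇑(J t) =ᵐ[μ]
      fun ω => (Λ ω + α)⁻¹ * Real.exp (-(t / (Λ ω + α))) * f ω) :
    J 0 = Uα f ∧
    (∀ t ∈ Set.Ici (0:ℝ), HasDerivWithinAt J (-(Uα (J t))) (Set.Ici 0) t) ∧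
    (∀ k : ℝ → Lp ℝ 2 μ, k 0 = Uα f →
      (∀ t ∈ Set.Ici (0:ℝ), HasDerivWithinAt k (-(Uα (k t))) (Set.Ici 0) t) →
      ∀ t ∈ Set.Ici (0:ℝ), k t = J t) := by
  have hinit : J 0 = Uα f := Lp.ext <| by
    filter_upwards [hJ 0, hU f] with ω hJ0 hUf
    simp [hJ0, hUf]
  have hderiv : ∀ t ∈ Ici (0:ℝ), HasDerivWithinAt J (-(Uα (J t))) (Ici 0) t := fun t ht =>
    hasDerivWithinAt_of_norm_sub_sub_smul_le (C := α⁻¹ ^ 3 * ‖f‖) fun s hs => by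
      rw [smul_neg, sub_neg_eq_add]
      exact (norm_sub_add_smul_resolvent_le hΛnonneg hα hU hJ hs ht).trans_eq (by ring)
  exact ⟨hinit, hderiv, fun k hk0 hk =>
    (-Uα).eqOn_Ici_of_hasDerivWithinAt hk hderiv (hk0.trans hinit.symm)⟩

/-- Spectral model: `U^α` is multiplication by `(Λ+α)⁻¹` (the `α`-resolvent) and
`J t = 𝒥^α_t f` is multiplication of `f` by `(Λ+α)⁻¹ exp (-(t/(Λ+α)))`.  Then
`J` is the unique `L²(m)`-valued solution of the Cauchy problem
`dj/dt = -U^α j`, `j(0) = U^α f`. -/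
theorem stmt_11
    {Ω : Type*} [MeasurableSpace Ω] (μ : Measure Ω)
    (Λ : Ω → ℝ) (hΛmeas : Measurable Λ) (hΛnonneg : ∀ ω, 0 ≤ Λ ω)
    (α : ℝ) (hα : 0 < α) (f : Lp ℝ 2 μ)
    (Uα : Lp ℝ 2 μ →L[ℝ] Lp ℝ 2 μ)
    (hU : ∀ h : Lp ℝ 2 μ, ⇑(Uα h) =ᵐ[μ] fun ω => (Λ ω + α)⁻¹ * h ω)
    (J : ℝ → Lp ℝ 2 μ)
    (hJ : ∀ t, ⇑(J t) =ᵐ[μ]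
      fun ω => (Λ ω + α)⁻¹ * Real.exp (-(t / (Λ ω + α))) * f ω) :
    J 0 = Uα f ∧
    (∀ t ∈ Set.Ici (0:ℝ), HasDerivWithinAt J (-(Uα (J t))) (Set.Ici 0) t) ∧
    (∀ k : ℝ → Lp ℝ 2 μ, k 0 = Uα f →
      (∀ t ∈ Set.Ici (0:ℝ), HasDerivWithinAt k (-(Uα (k t))) (Set.Ici 0) t) →
      ∀ t ∈ Set.Ici (0:ℝ), k t = J t) :=
  stmt_11_general μ Λ hΛnonneg α hα f Uα hU J hJ
end

section
/- Fix t > 0, γ ∈ (0,1) and g ∈ L²(m). Then f := ∫₀^∞ (γ e^{λt} + (1-γ)e^{-λt})^{-1} dE_λ g is the unique element of L²(m) satisfying (1-γ)P_t f + γ P_t^{-1} f = g; moreover f lies in the range of P_t, and (1-γ)f is the unique minimizer over h ∈ L²(m) of the Tikhonov functional ‖P_t h − g‖² + (γ/(1-γ))‖h‖². -/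
open MeasureTheory Real
open scoped RealInnerProductSpace

/-!
Spectrally, `P_t` is multiplication by `e^{-λt}`, so `(1-γ) P_t f + γ P_t⁻¹ f = g` is the
pointwise equation `S f = g` for the symbol `S = γ e^{λt} + (1-γ) e^{-λt}`. Since
`e^{λt} + e^{-λt} ≥ 2`, the symbol is bounded below by a positive constant, and it dominates
`γ e^{λt}`; hence `f = S⁻¹ g` is the unique solution and `e^{λt} f ∈ L²`. The Tikhonov functional
`‖A h - g‖² + c ‖h‖²` is strictly convex and is minimized exactly where the normal equation
`A* (A h - g) + c h = 0` holds; for the self-adjoint `A = P_t` and `c = γ/(1-γ)` it is solved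
by `(1-γ) f`.
-/

section Tikhonov

variable {E F : Type*} [NormedAddCommGroup E] [InnerProductSpace ℝ E]
  [NormedAddCommGroup F] [InnerProductSpace ℝ F]

theorem tikhonov_lt_of_inner_eq_zero (A : E →ₗ[ℝ] F) {c : ℝ} (hc : 0 < c) {g : F}
    {h₀ h : E} (hcrit : ∀ d, ⟪A h₀ - g, A d⟫ + c * ⟪h₀, d⟫ = 0) (hne : h ≠ h₀) :
    ‖A h₀ - g‖ ^ 2 + c * ‖h₀‖ ^ 2 < ‖A h - g‖ ^ 2 + c * ‖h‖ ^ 2 := by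
  obtain ⟨d, rfl⟩ : ∃ d, h = h₀ + d := ⟨h - h₀, by abel⟩
  have hd : 0 < c * ‖d‖ ^ 2 := by
    have : d ≠ 0 := fun hd => hne (by rw [hd, add_zero])
    positivity
  have hexpand : ‖A (h₀ + d) - g‖ ^ 2 + c * ‖h₀ + d‖ ^ 2 =
      ‖A h₀ - g‖ ^ 2 + c * ‖h₀‖ ^ 2 + 2 * (⟪A h₀ - g, A d⟫ + c * ⟪h₀, d⟫)
        + ‖A d‖ ^ 2 + c * ‖d‖ ^ 2 := by
    rw [map_add, add_sub_right_comm, norm_add_sq_real, norm_add_sq_real]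
    ring
  rw [hexpand, hcrit d]
  nlinarith [sq_nonneg ‖A d‖]

theorem LinearMap.IsSymmetric.tikhonov_lt {T : E →ₗ[ℝ] E} (hT : T.IsSymmetric) {c : ℝ}
    (hc : 0 < c) {g h₀ h : E} (hnormal : T (T h₀ - g) + c • h₀ = 0) (hne : h ≠ h₀) :
    ‖T h₀ - g‖ ^ 2 + c * ‖h₀‖ ^ 2 < ‖T h - g‖ ^ 2 + c * ‖h‖ ^ 2 :=
  tikhonov_lt_of_inner_eq_zero T hc (fun d => by
    rw [← hT, ← real_inner_smul_left, ← inner_add_left, hnormal, inner_zero_left]) hne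

end Tikhonov

theorem MeasureTheory.L2.isSymmetric_of_coeFn_eq_mul {Ω : Type*} [MeasurableSpace Ω]
    {μ : Measure Ω} {T : Lp ℝ 2 μ →L[ℝ] Lp ℝ 2 μ} {m : Ω → ℝ}
    (hT : ∀ f : Lp ℝ 2 μ, ⇑(T f) =ᵐ[μ] fun ω => m ω * f ω) :
    (T : Lp ℝ 2 μ →ₗ[ℝ] Lp ℝ 2 μ).IsSymmetric := by
  intro u v
  rw [ContinuousLinearMap.coe_coe, L2.inner_def, L2.inner_def]
  refine integral_congr_ae ?_
  filter_upwards [hT u, hT v] with ω hu hv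
  simp only [hu, hv, RCLike.inner_apply, conj_trivial]
  ring

/-- The spectral symbol `γ e^{x} + (1-γ) e^{-x}` of `(1-γ) P_t + γ P_t⁻¹`, at `x = λ t`. -/
noncomputable def tikhonovSymbol (γ x : ℝ) : ℝ := γ * exp x + (1 - γ) * exp (-x)

section TikhonovSymbol

variable {γ : ℝ}

theorem tikhonovSymbol_mul (x y : ℝ) :
    (1 - γ) * (exp (-x) * y) + γ * (exp x * y) = tikhonovSymbol γ x * y := by
  unfold tikhonovSymbol
  ring

theorem tikhonovSymbol_pos (hγ₀ : 0 < γ) (hγ₁ : γ ≤ 1) (x : ℝ) : 0 < tikhonovSymbol γ x := by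
  have : 0 ≤ 1 - γ := sub_nonneg.2 hγ₁
  unfold tikhonovSymbol
  positivity

theorem exp_mul_inv_tikhonovSymbol_le (hγ₀ : 0 < γ) (hγ₁ : γ ≤ 1) (x : ℝ) :
    exp x * (tikhonovSymbol γ x)⁻¹ ≤ γ⁻¹ := by
  rw [mul_inv_le_iff₀ (tikhonovSymbol_pos hγ₀ hγ₁ x), tikhonovSymbol, mul_add,
    inv_mul_cancel_left₀ hγ₀.ne']
  have : 0 ≤ 1 - γ := sub_nonneg.2 hγ₁
  have : 0 ≤ γ⁻¹ * ((1 - γ) * exp (-x)) := by positivity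
  linarith

theorem inv_tikhonovSymbol_le (hγ₀ : 0 < γ) (hγ₁ : γ < 1) (x : ℝ) :
    (tikhonovSymbol γ x)⁻¹ ≤ γ⁻¹ + (1 - γ)⁻¹ := by
  have hsymm : tikhonovSymbol (1 - γ) (-x) = tikhonovSymbol γ x := by
    rw [tikhonovSymbol, tikhonovSymbol, sub_sub_cancel, neg_neg, add_comm]
  have hexp : 1 ≤ exp x + exp (-x) := by linarith [add_one_le_exp x, add_one_le_exp (-x)]
  have hS := (tikhonovSymbol_pos hγ₀ hγ₁.le x).le
  calc (tikhonovSymbol γ x)⁻¹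
      ≤ (exp x + exp (-x)) * (tikhonovSymbol γ x)⁻¹ :=
        le_mul_of_one_le_left (by positivity) hexp
    _ = exp x * (tikhonovSymbol γ x)⁻¹ + exp (-x) * (tikhonovSymbol (1 - γ) (-x))⁻¹ := by
      rw [hsymm, add_mul]
    _ ≤ γ⁻¹ + (1 - γ)⁻¹ := add_le_add (exp_mul_inv_tikhonovSymbol_le hγ₀ hγ₁.le x)
      (exp_mul_inv_tikhonovSymbol_le (sub_pos.2 hγ₁) (sub_le_self _ hγ₀.le) (-x))

theorem tikhonovSymbol_normal_eq (hγ₀ : 0 < γ) (hγ₁ : γ < 1) (x z : ℝ) :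
    exp (-x) * (exp (-x) * ((1 - γ) * ((tikhonovSymbol γ x)⁻¹ * z)) - z)
      + γ / (1 - γ) * ((1 - γ) * ((tikhonovSymbol γ x)⁻¹ * z)) = 0 := by
  have hS := (tikhonovSymbol_pos hγ₀ hγ₁.le x).ne'
  have h1γ : 1 - γ ≠ 0 := (sub_pos.2 hγ₁).ne'
  field_simp
  unfold tikhonovSymbol
  rw [exp_neg]
  field_simp
  ring

end TikhonovSymbol

section SpectralSolution

variable {Ω : Type*} [MeasurableSpace Ω] {μ : Measure Ω} {Λ : Ω → ℝ} {t γ : ℝ}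

theorem measurable_tikhonovSymbol_comp (hΛ : Measurable Λ) :
    Measurable fun ω => tikhonovSymbol γ (Λ ω * t) := by
  unfold tikhonovSymbol
  fun_prop

theorem memLp_inv_tikhonovSymbol_mul (hΛ : Measurable Λ) (hγ₀ : 0 < γ) (hγ₁ : γ < 1)
    (g : Lp ℝ 2 μ) : MemLp (fun ω => (tikhonovSymbol γ (Λ ω * t))⁻¹ * g ω) 2 μ := by
  refine (Lp.memLp g).mul' (memLp_top_of_bound
    (measurable_tikhonovSymbol_comp hΛ).inv.aestronglyMeasurable (γ⁻¹ + (1 - γ)⁻¹)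
    (ae_of_all _ fun ω => ?_))
  rw [norm_of_nonneg (inv_nonneg.2 (tikhonovSymbol_pos hγ₀ hγ₁.le _).le)]
  exact inv_tikhonovSymbol_le hγ₀ hγ₁ _

theorem memLp_exp_mul_inv_tikhonovSymbol_mul (hΛ : Measurable Λ) (hγ₀ : 0 < γ) (hγ₁ : γ ≤ 1)
    (g : Lp ℝ 2 μ) :
    MemLp (fun ω => exp (t * Λ ω) * ((tikhonovSymbol γ (Λ ω * t))⁻¹ * g ω)) 2 μ := by
  simp_rw [← mul_assoc, mul_comm t]
  refine (Lp.memLp g).mul' (memLp_top_of_bound ((hΛ.mul_const t).exp.mul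
    (measurable_tikhonovSymbol_comp hΛ).inv).aestronglyMeasurable γ⁻¹ (ae_of_all _ fun ω => ?_))
  rw [norm_of_nonneg (by have := tikhonovSymbol_pos hγ₀ hγ₁ (Λ ω * t); positivity)]
  exact exp_mul_inv_tikhonovSymbol_le hγ₀ hγ₁ _

theorem tikhonov_normal_eq (hγ₀ : 0 < γ) (hγ₁ : γ < 1) {P : Lp ℝ 2 μ →L[ℝ] Lp ℝ 2 μ}
    (hP : ∀ f : Lp ℝ 2 μ, ⇑(P f) =ᵐ[μ] fun ω => exp (-(t * Λ ω)) * f ω) {f g : Lp ℝ 2 μ}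
    (hf : ⇑f =ᵐ[μ] fun ω => (tikhonovSymbol γ (Λ ω * t))⁻¹ * g ω) :
    P (P ((1 - γ) • f) - g) + (γ / (1 - γ)) • ((1 - γ) • f) = 0 := by
  refine Lp.ext ?_
  filter_upwards [Lp.coeFn_add (P (P ((1 - γ) • f) - g)) ((γ / (1 - γ)) • ((1 - γ) • f)),
    hP (P ((1 - γ) • f) - g), Lp.coeFn_sub (P ((1 - γ) • f)) g, hP ((1 - γ) • f),
    Lp.coeFn_smul (γ / (1 - γ)) ((1 - γ) • f), Lp.coeFn_smul (1 - γ) f, hf,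
    Lp.coeFn_zero ℝ 2 μ] with ω hadd hPsub hsub hPf hsmul hsmul' hfω hzero
  rw [hadd, hzero, Pi.add_apply, hPsub, hsub, Pi.sub_apply, hPf, hsmul, Pi.smul_apply,
    hsmul', Pi.smul_apply, smul_eq_mul, smul_eq_mul, hfω, mul_comm t]
  exact tikhonovSymbol_normal_eq hγ₀ hγ₁ _ _

end SpectralSolution

theorem stmt_18_general
    {Ω : Type*} [MeasurableSpace Ω] (μ : Measure Ω)
    (Λ : Ω → ℝ) (hΛmeas : Measurable Λ)
    (t : ℝ) (γ : ℝ) (hγ : γ ∈ Set.Ioo (0:ℝ) 1)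
    (P : Lp ℝ 2 μ →L[ℝ] Lp ℝ 2 μ)
    (hP : ∀ f : Lp ℝ 2 μ, ⇑(P f) =ᵐ[μ] fun ω => Real.exp (-(t * Λ ω)) * f ω)
    (g : Lp ℝ 2 μ) :
    ∃ f : Lp ℝ 2 μ,
      (⇑f =ᵐ[μ] fun ω =>
        (γ * Real.exp (Λ ω * t) + (1 - γ) * Real.exp (-(Λ ω * t)))⁻¹ * g ω) ∧
      MemLp (fun ω => Real.exp (t * Λ ω) * f ω) 2 μ ∧
      ((fun ω => (1 - γ) * (Real.exp (-(t * Λ ω)) * f ω)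
          + γ * (Real.exp (t * Λ ω) * f ω)) =ᵐ[μ] ⇑g) ∧
      (∀ f' : Lp ℝ 2 μ,
        MemLp (fun ω => Real.exp (t * Λ ω) * f' ω) 2 μ →
        ((fun ω => (1 - γ) * (Real.exp (-(t * Λ ω)) * f' ω)
            + γ * (Real.exp (t * Λ ω) * f' ω)) =ᵐ[μ] ⇑g) →
        f' = f) ∧
      (∃ w : Lp ℝ 2 μ, (fun ω => Real.exp (-(t * Λ ω)) * w ω) =ᵐ[μ] ⇑f) ∧
      (∀ h : Lp ℝ 2 μ, h ≠ (1 - γ) • f →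
        ‖P ((1 - γ) • f) - g‖ ^ 2 + γ / (1 - γ) * ‖(1 - γ) • f‖ ^ 2
          < ‖P h - g‖ ^ 2 + γ / (1 - γ) * ‖h‖ ^ 2) := by
  obtain ⟨hγ₀, hγ₁⟩ := hγ
  have hS : ∀ ω, tikhonovSymbol γ (Λ ω * t) ≠ 0 :=
    fun ω => (tikhonovSymbol_pos hγ₀ hγ₁.le _).ne'
  set f := (memLp_inv_tikhonovSymbol_mul (μ := μ) (t := t) hΛmeas hγ₀ hγ₁ g).toLp
  have hf : ⇑f =ᵐ[μ] fun ω => (tikhonovSymbol γ (Λ ω * t))⁻¹ * g ω := MemLp.coeFn_toLp _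
  have hw : MemLp (fun ω => exp (t * Λ ω) * f ω) 2 μ :=
    (memLp_exp_mul_inv_tikhonovSymbol_mul hΛmeas hγ₀ hγ₁.le g).ae_eq <| by
      filter_upwards [hf] with ω hω
      rw [hω]
  refine ⟨f, hf, hw, ?_, fun f' _ hf' => Lp.ext ?_, ⟨hw.toLp, ?_⟩, fun h hne => ?_⟩
  · filter_upwards [hf] with ω hω
    rw [mul_comm t, tikhonovSymbol_mul, hω, mul_inv_cancel_left₀ (hS ω)]
  · filter_upwards [hf', hf] with ω hf'ω hfω
    rw [mul_comm t, tikhonovSymbol_mul] at hf'ω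
    rw [hfω, ← hf'ω, inv_mul_cancel_left₀ (hS ω)]
  · filter_upwards [hw.coeFn_toLp] with ω hω
    rw [hω, ← mul_assoc, ← exp_add, neg_add_cancel, exp_zero, one_mul]
  · exact (L2.isSymmetric_of_coeFn_eq_mul hP).tikhonov_lt (div_pos hγ₀ (sub_pos.2 hγ₁))
      (tikhonov_normal_eq hγ₀ hγ₁ hP hf) hne

/-- Spectral model: `P` is the (bounded, self-adjoint) operator `P_t`, multiplication
by `exp (-(tΛ))`, and `P_t⁻¹ f` is multiplication by `exp (tΛ)` (defined when the
result is in `L²`).  For `γ ∈ (0,1)` and any `g ∈ L²(m)` there is a unique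
`f ∈ L²(m)` with `(1-γ) P_t f + γ P_t⁻¹ f = g`; it is given by
`f = ∫₀^∞ (γ e^{λt} + (1-γ) e^{-λt})⁻¹ dE_λ g`, lies in the range of `P_t`, and
`(1-γ) f` is the unique minimizer of the Tikhonov functional
`h ↦ ‖P_t h - g‖² + (γ/(1-γ)) ‖h‖²`. -/
theorem stmt_18
    {Ω : Type*} [MeasurableSpace Ω] (μ : Measure Ω)
    (Λ : Ω → ℝ) (hΛmeas : Measurable Λ) (hΛnonneg : ∀ ω, 0 ≤ Λ ω)
    (t : ℝ) (ht : 0 < t) (γ : ℝ) (hγ : γ ∈ Set.Ioo (0:ℝ) 1)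
    (P : Lp ℝ 2 μ →L[ℝ] Lp ℝ 2 μ)
    (hP : ∀ f : Lp ℝ 2 μ, ⇑(P f) =ᵐ[μ] fun ω => Real.exp (-(t * Λ ω)) * f ω)
    (g : Lp ℝ 2 μ) :
    ∃ f : Lp ℝ 2 μ,
      (⇑f =ᵐ[μ] fun ω =>
        (γ * Real.exp (Λ ω * t) + (1 - γ) * Real.exp (-(Λ ω * t)))⁻¹ * g ω) ∧
      MemLp (fun ω => Real.exp (t * Λ ω) * f ω) 2 μ ∧
      ((fun ω => (1 - γ) * (Real.exp (-(t * Λ ω)) * f ω)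
          + γ * (Real.exp (t * Λ ω) * f ω)) =ᵐ[μ] ⇑g) ∧
      (∀ f' : Lp ℝ 2 μ,
        MemLp (fun ω => Real.exp (t * Λ ω) * f' ω) 2 μ →
        ((fun ω => (1 - γ) * (Real.exp (-(t * Λ ω)) * f' ω)
            + γ * (Real.exp (t * Λ ω) * f' ω)) =ᵐ[μ] ⇑g) →
        f' = f) ∧
      (∃ w : Lp ℝ 2 μ, (fun ω => Real.exp (-(t * Λ ω)) * w ω) =ᵐ[μ] ⇑f) ∧
      (∀ h : Lp ℝ 2 μ, h ≠ (1 - γ) • f →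
        ‖P ((1 - γ) • f) - g‖ ^ 2 + γ / (1 - γ) * ‖(1 - γ) • f‖ ^ 2
          < ‖P h - g‖ ^ 2 + γ / (1 - γ) * ‖h‖ ^ 2) :=
  stmt_18_general μ Λ hΛmeas t γ hγ P hP g
end

section
/- Let φ be as in the regularisation theorem and for γ ∈ (0,1) let f_γ = ∫₀^∞ (γφ(λ) + (1-γ)e^{-λt})^{-1} dE_λ g denote the solution of the regularised equation (1-γ)P_t f + γφ(-A)f = g. If g lies in the range of P_t (i.e. ∫₀^∞ e^{2λt} d(E_λ g, g) < ∞), then ‖f_γ − P_t^{-1} g‖ → 0 as γ → 0. -/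
/-!
The difference `f_γ - P_t⁻¹ g` is multiplication of `g` by
`(γ φ(Λ) + (1 - γ) e^{-tΛ})⁻¹ - e^{tΛ}`. This multiplier tends to `0` pointwise as `γ → 0`,
and for `γ ≤ 1/2` it is bounded by `2 e^{tΛ}`; since `e^{tΛ} g ∈ L²`, dominated convergence
applies.
-/

open MeasureTheory Real Filter Topology Set

namespace MeasureTheory.L2

variable {Ω : Type*} [MeasurableSpace Ω] {μ : Measure Ω}

theorem norm_sq_eq_integral_sq_of_ae_eq {f : Lp ℝ 2 μ} {g : Ω → ℝ} (h : ⇑f =ᵐ[μ] g) :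
    ‖f‖ ^ 2 = ∫ ω, g ω ^ 2 ∂μ := by
  rw [← real_inner_self_eq_norm_sq, inner_def]
  refine integral_congr_ae ?_
  filter_upwards [h] with ω hω
  simp [hω, sq]

theorem tendsto_norm_zero_of_dominated {ι : Type*} {l : Filter ι} [l.IsCountablyGenerated]
    {F : ι → Lp ℝ 2 μ} {G : ι → Ω → ℝ} {bound : Ω → ℝ} (hbound : MemLp bound 2 μ)
    (hFG : ∀ᶠ i in l, ⇑(F i) =ᵐ[μ] G i) (hle : ∀ᶠ i in l, ∀ᵐ ω ∂μ, |G i ω| ≤ bound ω)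
    (hlim : ∀ᵐ ω ∂μ, Tendsto (G · ω) l (𝓝 0)) :
    Tendsto (fun i => ‖F i‖) l (𝓝 0) := by
  have hint : Tendsto (fun i => ∫ ω, G i ω ^ 2 ∂μ) l (𝓝 (∫ _, (0:ℝ) ^ 2 ∂μ)) := by
    refine tendsto_integral_filter_of_dominated_convergence (fun ω => bound ω ^ 2) ?_ ?_
      hbound.integrable_sq ?_
    · filter_upwards [hFG] with i h
      exact ((Lp.aestronglyMeasurable (F i)).congr h).pow 2
    · filter_upwards [hle] with i h
      filter_upwards [h] with ω hω
      rw [norm_pow, norm_eq_abs]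
      exact pow_le_pow_left₀ (abs_nonneg _) hω 2
    · filter_upwards [hlim] with ω hω
      exact hω.pow 2
  have hsq : Tendsto (fun i => ‖F i‖ ^ 2) l (𝓝 0) := by
    simp only [zero_pow two_ne_zero, integral_zero] at hint
    refine hint.congr' ?_
    filter_upwards [hFG] with i h
    exact (norm_sq_eq_integral_sq_of_ae_eq h).symm
  simpa [Real.sqrt_sq (norm_nonneg _)] using hsq.sqrt

end MeasureTheory.L2

theorem abs_inv_add_mul_sub_inv_le {γ a e : ℝ} (hγ₀ : 0 ≤ γ) (hγ : γ ≤ 1 / 2) (ha : 0 ≤ a)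
    (he : 0 < e) : |(γ * a + (1 - γ) * e)⁻¹ - e⁻¹| ≤ 2 * e⁻¹ := by
  have hden : e / 2 ≤ γ * a + (1 - γ) * e := by nlinarith [mul_nonneg hγ₀ ha]
  have hinv : (γ * a + (1 - γ) * e)⁻¹ ≤ 2 * e⁻¹ := by
    simpa [inv_div, div_eq_mul_inv] using inv_anti₀ (by positivity) hden
  exact abs_sub_le_of_nonneg_of_le (inv_nonneg.2 (by linarith)) hinv (by positivity)
    (by linarith [inv_pos.2 he])

theorem tendsto_inv_add_mul_nhds_zero (a : ℝ) {e : ℝ} (he : e ≠ 0) :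
    Tendsto (fun γ : ℝ => (γ * a + (1 - γ) * e)⁻¹) (𝓝 0) (𝓝 e⁻¹) := by
  have h : ContinuousAt (fun γ : ℝ => (γ * a + (1 - γ) * e)⁻¹) 0 :=
    ContinuousAt.inv₀ (by fun_prop) (by simpa using he)
  simpa using h.tendsto

theorem stmt_19_general
    {Ω : Type*} [MeasurableSpace Ω] (μ : Measure Ω)
    (Λ : Ω → ℝ) (hΛnonneg : ∀ ω, 0 ≤ Λ ω)
    (φ : ℝ → ℝ)
    (hφnonneg : ∀ x ≥ (0:ℝ), 0 ≤ φ x)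
    (t : ℝ)
    (g : Lp ℝ 2 μ)
    (fγ : ℝ → Lp ℝ 2 μ)
    (hfγ : ∀ γ ∈ Set.Ioo (0:ℝ) 1, ⇑(fγ γ) =ᵐ[μ]
      fun ω => (γ * φ (Λ ω) + (1 - γ) * Real.exp (-(Λ ω * t)))⁻¹ * g ω)
    (finv : Lp ℝ 2 μ)
    (hfinv : ⇑finv =ᵐ[μ] fun ω => Real.exp (t * Λ ω) * g ω) :
    Tendsto (fun γ => ‖fγ γ - finv‖) (nhdsWithin 0 (Set.Ioo 0 1)) (nhds 0) := by
  have hexp : ∀ ω, exp (t * Λ ω) = (exp (-(Λ ω * t)))⁻¹ := fun ω => by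
    rw [← exp_neg, neg_neg, mul_comm]
  have hsmall : ∀ᶠ γ in 𝓝[Ioo 0 1] (0:ℝ), γ ∈ Ioo 0 (1 / 2) :=
    mem_nhdsWithin.2 ⟨Iio (1 / 2), isOpen_Iio, by norm_num, fun γ hγ => ⟨hγ.2.1, hγ.1⟩⟩
  refine L2.tendsto_norm_zero_of_dominated
    (G := fun γ ω => ((γ * φ (Λ ω) + (1 - γ) * exp (-(Λ ω * t)))⁻¹ - exp (t * Λ ω)) * g ω)
    (bound := fun ω => 2 * ‖exp (t * Λ ω) * g ω‖)
    (((Lp.memLp finv).ae_eq hfinv).norm.const_mul 2) ?_ ?_ ?_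
  · filter_upwards [self_mem_nhdsWithin] with γ hγ
    filter_upwards [hfγ γ hγ, hfinv, Lp.coeFn_sub (fγ γ) finv] with ω h₁ h₂ h₃
    simp only [h₃, Pi.sub_apply, h₁, h₂]
    ring
  · filter_upwards [hsmall] with γ hγ
    refine Eventually.of_forall fun ω => ?_
    rw [norm_eq_abs, abs_mul, abs_mul, ← mul_assoc, abs_of_pos (exp_pos _), hexp]
    exact mul_le_mul_of_nonneg_right (abs_inv_add_mul_sub_inv_le hγ.1.le hγ.2.le
      (hφnonneg _ (hΛnonneg ω)) (exp_pos _)) (abs_nonneg _)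
  · refine Eventually.of_forall fun ω => ?_
    have h := ((tendsto_inv_add_mul_nhds_zero (φ (Λ ω)) (exp_pos (-(Λ ω * t))).ne').sub_const
      (exp (t * Λ ω))).mul_const (g ω)
    rw [← hexp, sub_self, zero_mul] at h
    exact h.mono_left nhdsWithin_le_nhds

/-- Spectral model: `fγ γ` is the solution of the regularised equation
`(1-γ) P_t f + γ φ(-A) f = g`, i.e. multiplication of `g` by
`(γφ(Λ) + (1-γ) exp (-(Λt)))⁻¹`, and `finv = P_t⁻¹ g` is multiplication of `g` by
`exp (tΛ)` (which exists since `g` is in the range of `P_t`).  Then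
`‖fγ γ - P_t⁻¹ g‖ → 0` as `γ → 0⁺`. -/
theorem stmt_19
    {Ω : Type*} [MeasurableSpace Ω] (μ : Measure Ω)
    (Λ : Ω → ℝ) (hΛmeas : Measurable Λ) (hΛnonneg : ∀ ω, 0 ≤ Λ ω)
    (φ : ℝ → ℝ) (hφcont : ContinuousOn φ (Set.Ici 0))
    (hφnonneg : ∀ x ≥ (0:ℝ), 0 ≤ φ x)
    (hφliminf : ∃ c > (0:ℝ), ∀ᶠ x in atTop, c ≤ φ x)
    (t : ℝ) (ht : 0 < t)
    (hφbdd : ∃ C : ℝ, ∀ x ≥ (0:ℝ), Real.exp (-(t * x)) * φ x ≤ C)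
    (g : Lp ℝ 2 μ)
    (fγ : ℝ → Lp ℝ 2 μ)
    (hfγ : ∀ γ ∈ Set.Ioo (0:ℝ) 1, ⇑(fγ γ) =ᵐ[μ]
      fun ω => (γ * φ (Λ ω) + (1 - γ) * Real.exp (-(Λ ω * t)))⁻¹ * g ω)
    (finv : Lp ℝ 2 μ)
    (hfinv : ⇑finv =ᵐ[μ] fun ω => Real.exp (t * Λ ω) * g ω) :
    Tendsto (fun γ => ‖fγ γ - finv‖) (nhdsWithin 0 (Set.Ioo 0 1)) (nhds 0) :=
  stmt_19_general μ Λ hΛnonneg φ hφnonneg t g fγ hfγ finv hfinv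
end
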